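/- arXiv:math-ph/9811023 — 3 statements merged into one kernel-verified Lean document; each statement's English description precedes it below -/
import Mathlib

section
/- For Re(t) < 0, the integral Z(t) = ∫_{-∞}^{∞} e^{-x²/2} e^{t x⁴/4!} dx/√(2π) converges and defines a holomorphic function of t, and its asymptotic expansion at t = 0 on the sector Ω_ε is the formal power series Σ_{v≥0} t^v/((4!)^v v!) · ∫ e^{-x²/2} x^{4v} dx/√(2π). -/
open Filter MeasureTheory Nat

/-- The sector `Ω_ε = {z : π/2 + ε < arg z < 3π/2 − ε}` about the negative real
axis, described via the principal argument as `|arg z| > π/2 + ε`. -/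
def Sector (ε : ℝ) : Set ℂ := {z : ℂ | Real.pi / 2 + ε < |Complex.arg z|}

/-- `a` is an asymptotic expansion of `h` at `0` along the domain `Ω`. -/
def IsAsymptoticExpansionAt (Ω : Set ℂ) (h : ℂ → ℂ) (a : ℕ → ℂ) : Prop :=
  ∀ m : ℕ, Tendsto
    (fun z : ℂ => (h z - ∑ v ∈ Finset.range (m + 1), a v * z ^ v) / z ^ (m + 1))
    (nhdsWithin 0 Ω) (nhds (a (m + 1)))

/-- `Z(t) = ∫ e^{-x²/2} e^{t x⁴/4!} dx/√(2π)`. -/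
noncomputable def Zfun (t : ℂ) : ℂ :=
  ∫ x : ℝ, Complex.exp (-(x : ℂ) ^ 2 / 2) * Complex.exp (t * (x : ℂ) ^ 4 / 24)
      / (Real.sqrt (2 * Real.pi) : ℂ)

lemma aux_pow_bound (k : ℕ) (x : ℝ) : x ^ (2*k) ≤ (4*k : ℝ) ^ k * Real.exp (x^2/4) := by
  rcases Nat.eq_zero_or_pos k with hk | hk
  · subst hk; simpa using Real.one_le_exp (by positivity : (0:ℝ) ≤ x^2/4)
  · have hk4 : (0:ℝ) < 4*k := by positivity
    have h1 : x^2 ≤ 4*k * Real.exp (x^2/(4*k)) := by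
      have h := mul_le_mul_of_nonneg_left (Real.add_one_le_exp (x^2/(4*k))) hk4.le
      have : 4*(k:ℝ) * (x^2/(4*k) + 1) = x^2 + 4*k := by field_simp
      nlinarith
    calc x ^ (2*k) = (x^2)^k := by rw [pow_mul]
      _ ≤ (4*k * Real.exp (x^2/(4*k)))^k := by
          apply pow_le_pow_left₀ (sq_nonneg x) h1
      _ = (4*k:ℝ)^k * Real.exp (x^2/(4*k))^k := mul_pow _ _ _
      _ = (4*k:ℝ)^k * Real.exp (x^2/4) := by
          rw [← Real.exp_nat_mul]
          congr 1
          field_simp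

lemma integrable_pow_gauss (k : ℕ) :
    Integrable fun x : ℝ => x ^ (2*k) * Real.exp (-x^2/2) := by
  have hint : Integrable fun x : ℝ => (4*k:ℝ)^k * Real.exp (-(1/4) * x^2) :=
    (integrable_exp_neg_mul_sq (by norm_num)).const_mul _
  refine hint.mono' (((continuous_pow _).mul (by continuity)).aestronglyMeasurable) ?_
  filter_upwards with x
  have h0 : 0 ≤ x ^ (2*k) := by rw [pow_mul]; positivity
  rw [Real.norm_eq_abs, abs_mul, abs_of_nonneg h0, abs_of_nonneg (Real.exp_pos _).le]
  calc x^(2*k) * Real.exp (-x^2/2) ≤ ((4*k:ℝ)^k * Real.exp (x^2/4)) * Real.exp (-x^2/2) := by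
        apply mul_le_mul_of_nonneg_right (aux_pow_bound k x) (Real.exp_pos _).le
    _ = (4*k:ℝ)^k * Real.exp (-(1/4) * x^2) := by
        rw [mul_assoc, ← Real.exp_add]; congr 2; ring

lemma exp_taylor_bound : ∀ (n : ℕ) (w : ℂ), w.re ≤ 0 →
    ‖Complex.exp w - ∑ v ∈ Finset.range n, w ^ v / (v ! : ℂ)‖ ≤ ‖w‖ ^ n / n ! := by
  intro n
  induction n with
  | zero =>
      intro w hw
      simp only [Finset.range_zero, Finset.sum_empty, sub_zero, pow_zero, factorial_zero,
        Nat.cast_one, div_one]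
      rw [Complex.norm_exp]
      exact Real.exp_le_one_iff.mpr hw
  | succ n ih =>
      intro w hw
      have hG : ∀ z : ℂ, HasDerivAt
          (fun z : ℂ => Complex.exp (z*w) - ∑ v ∈ Finset.range (n+1), (z*w)^v / (v ! : ℂ))
          (w * (Complex.exp (z*w) - ∑ v ∈ Finset.range n, (z*w)^v / (v ! : ℂ))) z := by
        intro z
        have hexp : HasDerivAt (fun z : ℂ => Complex.exp (z*w)) (Complex.exp (z*w) * (1*w)) z :=
          ((hasDerivAt_id z).mul_const w).cexp
        have hterm : ∀ v ∈ Finset.range (n+1), HasDerivAt (fun z : ℂ => (z*w)^v / (v ! : ℂ))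
            ((v * (z*w)^(v-1) * (1*w)) / (v ! : ℂ)) z := fun v _ =>
          (((hasDerivAt_id z).mul_const w).pow v).div_const _
        have hsum := HasDerivAt.sum hterm
        have h := hexp.sub hsum
        convert h using 1
        any_goals rfl
        · ext y; simp [Finset.sum_apply]
        rw [Finset.sum_range_succ']
        simp only [zero_div, add_zero, Nat.add_sub_cancel, one_mul, Nat.cast_zero, zero_mul,
          Nat.factorial_zero, Nat.cast_one, pow_zero]
        rw [mul_sub, Finset.mul_sum]
        congr 1
        · ring
        · refine Finset.sum_congr rfl fun k _ => ?_
          have hk : (k ! : ℂ) ≠ 0 := Nat.cast_ne_zero.mpr k.factorial_ne_zero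
          have hk1 : ((k:ℂ)+1) ≠ 0 := Nat.cast_add_one_ne_zero k
          rw [Nat.factorial_succ]
          push_cast
          field_simp
      set g : ℝ → ℂ := fun s =>
        w * (Complex.exp ((s:ℂ)*w) - ∑ v ∈ Finset.range n, ((s:ℂ)*w)^v / (v ! : ℂ)) with hg
      have hF : ∀ s : ℝ, HasDerivAt (fun s : ℝ =>
          Complex.exp ((s:ℂ)*w) - ∑ v ∈ Finset.range (n+1), ((s:ℂ)*w)^v / (v ! : ℂ)) (g s) s :=
        fun s => (hG (s:ℂ)).comp_ofReal
      have hgc : Continuous g := by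
        apply continuous_const.mul
        apply Continuous.sub
        · exact Complex.continuous_exp.comp (Complex.continuous_ofReal.mul continuous_const)
        · apply continuous_finset_sum
          intro v _
          exact ((Complex.continuous_ofReal.mul continuous_const).pow v).div_const _
      have hFTC := intervalIntegral.integral_eq_sub_of_hasDerivAt
        (fun s _ => hF s) (hgc.intervalIntegrable 0 1)
      have hval : Complex.exp w - ∑ v ∈ Finset.range (n+1), w^v / (v ! : ℂ)
          = ∫ s in (0:ℝ)..1, g s := by
        rw [hFTC]
        simp [Finset.sum_range_succ']
      rw [hval]
      have hbd : ∀ s ∈ Set.Ioc (0:ℝ) 1, ‖g s‖ ≤ (‖w‖^(n+1) / n !) * s^n := by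
        intro s hs
        have hs0 : (0:ℝ) ≤ s := hs.1.le
        have hre : ((s:ℂ)*w).re ≤ 0 := by
          rw [Complex.mul_re]
          simp only [Complex.ofReal_re, Complex.ofReal_im, zero_mul, sub_zero]
          exact mul_nonpos_of_nonneg_of_nonpos hs0 hw
        have hnorm : ‖(s:ℂ)*w‖ = s * ‖w‖ := by
          rw [norm_mul, Complex.norm_real, Real.norm_eq_abs, abs_of_nonneg hs0]
        have := ih ((s:ℂ)*w) hre
        rw [hg]
        rw [norm_mul]
        calc ‖w‖ * ‖Complex.exp ((s:ℂ)*w) - ∑ v ∈ Finset.range n, ((s:ℂ)*w)^v / (v ! : ℂ)‖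
            ≤ ‖w‖ * (‖(s:ℂ)*w‖^n / n !) := by
              exact mul_le_mul_of_nonneg_left this (norm_nonneg w)
          _ = (‖w‖^(n+1) / n !) * s^n := by rw [hnorm, mul_pow]; ring
      have hint : IntervalIntegrable (fun s : ℝ => (‖w‖^(n+1) / n !) * s^n) volume 0 1 :=
        (continuous_const.mul (continuous_pow n)).intervalIntegrable 0 1
      have hmain := intervalIntegral.norm_integral_le_abs_of_norm_le (μ := volume)
        (f := g) (g := fun s => (‖w‖^(n+1) / n !) * s^n) ?_ hint
      · refine hmain.trans ?_
        rw [intervalIntegral.integral_const_mul, integral_pow, Nat.factorial_succ]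
        have h10 : (1:ℝ)^(n+1) - 0^(n+1) = 1 := by norm_num
        rw [h10]
        push_cast
        rw [abs_of_nonneg (by positivity)]
        have h1 : ((n ! : ℝ)) ≠ 0 := by exact_mod_cast n.factorial_ne_zero
        have h2 : ((n:ℝ)+1) ≠ 0 := by positivity
        exact le_of_eq (by field_simp)
      · rw [Set.uIoc_of_le (by norm_num : (0:ℝ) ≤ 1)]
        filter_upwards [ae_restrict_mem measurableSet_Ioc] with s hs
        exact hbd s hs

lemma norm_gauss_cexp (x : ℝ) : ‖Complex.exp (-(x:ℂ)^2/2)‖ = Real.exp (-x^2/2) := by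
  rw [show -(x:ℂ)^2/2 = ((-x^2/2 : ℝ):ℂ) by push_cast; ring, ← Complex.ofReal_exp,
    Complex.norm_real, Real.norm_eq_abs, abs_of_nonneg (Real.exp_pos _).le]

lemma re_quartic (t : ℂ) (x : ℝ) : (t * (x:ℂ)^4 / 24).re = t.re * (x^4/24) := by
  rw [show t * (x:ℂ)^4 / 24 = ((x^4/24 : ℝ):ℂ) * t by push_cast; ring]
  rw [Complex.re_ofReal_mul]
  ring

lemma norm_quartic (t : ℂ) (x : ℝ) : ‖t * (x:ℂ)^4 / 24‖ = ‖t‖ * (x^4/24) := by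
  rw [show t * (x:ℂ)^4 / 24 = t * ((x^4/24 : ℝ):ℂ) by push_cast; ring]
  rw [norm_mul, Complex.norm_real, Real.norm_eq_abs, abs_of_nonneg (by positivity)]

lemma gauss_div_integrable :
    Integrable fun x : ℝ => Real.exp (-x^2/2) / Real.sqrt (2*Real.pi) := by
  have h := integrable_exp_neg_mul_sq (show (0:ℝ) < 1/2 by norm_num)
  have h2 : (fun x : ℝ => Real.exp (-(1/2)*x^2)) = fun x : ℝ => Real.exp (-x^2/2) := by
    funext x; congr 1; ring
  rw [h2] at h
  exact h.div_const _

lemma integrable_real_term (v : ℕ) :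
    Integrable fun x : ℝ => Real.exp (-x^2/2) * x^(4*v) / Real.sqrt (2*Real.pi) := by
  have h := (integrable_pow_gauss (2*v)).div_const (Real.sqrt (2*Real.pi))
  refine h.congr (Eventually.of_forall fun x => ?_)
  rw [show 2*(2*v) = 4*v by ring]
  ring

lemma integrable_integrand {t : ℂ} (ht : t.re ≤ 0) :
    Integrable fun x : ℝ => Complex.exp (-(x:ℂ)^2/2) * Complex.exp (t*(x:ℂ)^4/24)
      / (Real.sqrt (2*Real.pi) : ℂ) := by
  refine gauss_div_integrable.mono' ?_ ?_
  · apply Continuous.aestronglyMeasurable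
    apply Continuous.div_const
    apply Continuous.mul
    · exact Complex.continuous_exp.comp (by continuity)
    · exact Complex.continuous_exp.comp (by continuity)
  · filter_upwards with x
    rw [norm_div, norm_mul, norm_gauss_cexp, Complex.norm_real, Real.norm_eq_abs,
      abs_of_nonneg (Real.sqrt_nonneg _)]
    have h1 : ‖Complex.exp (t*(x:ℂ)^4/24)‖ ≤ 1 := by
      rw [Complex.norm_exp]
      apply Real.exp_le_one_iff.mpr
      rw [re_quartic]
      exact mul_nonpos_of_nonpos_of_nonneg ht (by positivity)
    calc Real.exp (-x^2/2) * ‖Complex.exp (t*(x:ℂ)^4/24)‖ / Real.sqrt (2*Real.pi)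
        ≤ Real.exp (-x^2/2) * 1 / Real.sqrt (2*Real.pi) := by gcongr
      _ = Real.exp (-x^2/2) / Real.sqrt (2*Real.pi) := by rw [mul_one]

lemma term_eq (t : ℂ) (v : ℕ) (x : ℝ) :
    Complex.exp (-(x:ℂ)^2/2) * ((t*(x:ℂ)^4/24)^v / (v ! : ℂ)) / (Real.sqrt (2*Real.pi) : ℂ)
      = (t^v / ((24:ℂ)^v * (v ! : ℂ))) *
        ((Real.exp (-x^2/2) * x^(4*v) / Real.sqrt (2*Real.pi) : ℝ) : ℂ) := by
  have hv : (v ! : ℂ) ≠ 0 := Nat.cast_ne_zero.mpr v.factorial_ne_zero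
  rw [show -(x:ℂ)^2/2 = ((-x^2/2 : ℝ):ℂ) by push_cast; ring, ← Complex.ofReal_exp]
  push_cast
  rw [pow_mul]
  rw [div_pow, mul_pow]
  field_simp

lemma integrable_cterm (t : ℂ) (v : ℕ) :
    Integrable fun x : ℝ => Complex.exp (-(x:ℂ)^2/2) * ((t*(x:ℂ)^4/24)^v / (v ! : ℂ))
      / (Real.sqrt (2*Real.pi) : ℂ) := by
  simp_rw [term_eq]
  exact ((integrable_real_term v).ofReal.const_mul _)

lemma sum_term_integral (t : ℂ) (n : ℕ) :
    ∑ v ∈ Finset.range n, (((∫ x : ℝ, Real.exp (-x ^ 2 / 2) * x ^ (4 * v)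
            / Real.sqrt (2 * Real.pi) : ℝ) : ℂ) / ((24 : ℂ) ^ v * (v ! : ℂ))) * t ^ v
      = ∫ x : ℝ, ∑ v ∈ Finset.range n,
          Complex.exp (-(x:ℂ)^2/2) * ((t*(x:ℂ)^4/24)^v / (v ! : ℂ))
            / (Real.sqrt (2*Real.pi) : ℂ) := by
  rw [integral_finset_sum _ (fun v _ => integrable_cterm t v)]
  refine Finset.sum_congr rfl fun v _ => ?_
  simp_rw [term_eq]
  rw [integral_const_mul,
    show (∫ a : ℝ, ((Real.exp (-a^2/2) * a^(4*v) / Real.sqrt (2*Real.pi) : ℝ) : ℂ))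
      = ((∫ a : ℝ, Real.exp (-a^2/2) * a^(4*v) / Real.sqrt (2*Real.pi) : ℝ) : ℂ)
    from integral_ofReal]
  ring

lemma remainder_bound {t : ℂ} (ht : t.re ≤ 0) (n : ℕ) :
    ‖Zfun t - ∑ v ∈ Finset.range n, (((∫ x : ℝ, Real.exp (-x ^ 2 / 2) * x ^ (4 * v)
          / Real.sqrt (2 * Real.pi) : ℝ) : ℂ) / ((24 : ℂ) ^ v * (v ! : ℂ))) * t ^ v‖
      ≤ ‖t‖^n * ((∫ x : ℝ, Real.exp (-x^2/2) * x^(4*n) / Real.sqrt (2*Real.pi))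
          / (24^n * n !)) := by
  rw [sum_term_integral]
  unfold Zfun
  rw [← integral_sub (integrable_integrand ht)
    (integrable_finset_sum _ (fun v _ => integrable_cterm t v))]
  have hbound : Integrable fun x : ℝ => (‖t‖^n/(24^n * n !)) *
      (Real.exp (-x^2/2) * x^(4*n) / Real.sqrt (2*Real.pi)) :=
    (integrable_real_term n).const_mul _
  have hptw : ∀ᵐ x : ℝ, ‖Complex.exp (-(x:ℂ)^2/2) * Complex.exp (t*(x:ℂ)^4/24)
        / (Real.sqrt (2*Real.pi) : ℂ)
      - ∑ v ∈ Finset.range n, Complex.exp (-(x:ℂ)^2/2) * ((t*(x:ℂ)^4/24)^v / (v ! : ℂ))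
        / (Real.sqrt (2*Real.pi) : ℂ)‖ ≤ (‖t‖^n/(24^n * n !)) *
      (Real.exp (-x^2/2) * x^(4*n) / Real.sqrt (2*Real.pi)) := by
    filter_upwards with x
    have hfe : Complex.exp (-(x:ℂ)^2/2) * Complex.exp (t*(x:ℂ)^4/24)
          / (Real.sqrt (2*Real.pi) : ℂ)
        - ∑ v ∈ Finset.range n, Complex.exp (-(x:ℂ)^2/2) * ((t*(x:ℂ)^4/24)^v / (v ! : ℂ))
          / (Real.sqrt (2*Real.pi) : ℂ)
        = Complex.exp (-(x:ℂ)^2/2) *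
            (Complex.exp (t*(x:ℂ)^4/24)
              - ∑ v ∈ Finset.range n, (t*(x:ℂ)^4/24)^v / (v ! : ℂ))
            / (Real.sqrt (2*Real.pi) : ℂ) := by
      rw [mul_sub, sub_div]
      congr 1
      rw [Finset.mul_sum, Finset.sum_div]
    rw [hfe, norm_div, norm_mul, norm_gauss_cexp, Complex.norm_real, Real.norm_eq_abs,
      abs_of_nonneg (Real.sqrt_nonneg _)]
    have hre : (t*(x:ℂ)^4/24).re ≤ 0 := by
      rw [re_quartic]; exact mul_nonpos_of_nonpos_of_nonneg ht (by positivity)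
    have htb := exp_taylor_bound n _ hre
    have hS : (0:ℝ) < Real.sqrt (2*Real.pi) := Real.sqrt_pos.mpr (by positivity)
    calc Real.exp (-x^2/2) * ‖Complex.exp (t*(x:ℂ)^4/24)
            - ∑ v ∈ Finset.range n, (t*(x:ℂ)^4/24)^v / (v ! : ℂ)‖ / Real.sqrt (2*Real.pi)
        ≤ Real.exp (-x^2/2) * (‖t*(x:ℂ)^4/24‖^n / n !) / Real.sqrt (2*Real.pi) := by
          gcongr
      _ = (‖t‖^n/(24^n * n !)) * (Real.exp (-x^2/2) * x^(4*n) / Real.sqrt (2*Real.pi)) := by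
          rw [norm_quartic, pow_mul]
          have hn : ((n ! : ℝ)) ≠ 0 := by exact_mod_cast n.factorial_ne_zero
          field_simp
          rw [← mul_pow, div_mul_cancel₀ _ (by norm_num : (24:ℝ) ≠ 0), mul_pow, mul_comm]
  refine (norm_integral_le_of_norm_le hbound hptw).trans ?_
  rw [integral_const_mul]
  exact le_of_eq (by ring)

lemma aux_mul_exp {δ : ℝ} (hδ : 0 < δ) {u : ℝ} (hu : 0 ≤ u) : u * Real.exp (-(δ*u)) ≤ 1/δ := by
  have h := Real.add_one_le_exp (δ*u)
  have he := Real.exp_pos (δ*u)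
  rw [Real.exp_neg, ← div_eq_mul_inv, div_le_div_iff₀ he hδ]
  nlinarith

lemma sector_facts {ε : ℝ} (hε : 0 < ε) {z : ℂ} (hz : z ∈ Sector ε) : z.re ≤ 0 ∧ z ≠ 0 := by
  have h2 : Real.pi/2 + ε < |Complex.arg z| := hz
  constructor
  · by_contra h
    push_neg at h
    have := Complex.abs_arg_lt_pi_div_two_iff.mpr (Or.inl h)
    linarith
  · rintro rfl
    rw [Complex.arg_zero, abs_zero] at h2
    have := Real.pi_pos
    linarith

lemma cont_integrand (t : ℂ) : Continuous fun x : ℝ =>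
    Complex.exp (-(x:ℂ)^2/2) * Complex.exp (t*(x:ℂ)^4/24) / (Real.sqrt (2*Real.pi) : ℂ) := by
  apply Continuous.div_const
  exact (Complex.continuous_exp.comp (by continuity)).mul
    (Complex.continuous_exp.comp (by continuity))

lemma cont_integrand' (t : ℂ) : Continuous fun x : ℝ =>
    Complex.exp (-(x:ℂ)^2/2) * (Complex.exp (t*(x:ℂ)^4/24) * (1*(x:ℂ)^4/24))
      / (Real.sqrt (2*Real.pi) : ℂ) := by
  apply Continuous.div_const
  exact (Complex.continuous_exp.comp (by continuity)).mul
    ((Complex.continuous_exp.comp (by continuity)).mul (by continuity))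

lemma holo_part : DifferentiableOn ℂ Zfun {t : ℂ | t.re < 0} := by
  intro t ht
  simp only [Set.mem_setOf_eq] at ht
  apply DifferentiableAt.differentiableWithinAt
  set δ : ℝ := -t.re/2 with hδdef
  have hδ : 0 < δ := by rw [hδdef]; linarith
  have key := hasDerivAt_integral_of_dominated_loc_of_deriv_le (𝕜 := ℂ) (μ := volume)
    (F := fun t' (x:ℝ) => Complex.exp (-(x:ℂ)^2/2) * Complex.exp (t'*(x:ℂ)^4/24)
      / (Real.sqrt (2*Real.pi):ℂ))
    (F' := fun t' (x:ℝ) => Complex.exp (-(x:ℂ)^2/2)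
      * (Complex.exp (t'*(x:ℂ)^4/24) * (1*(x:ℂ)^4/24)) / (Real.sqrt (2*Real.pi):ℂ))
    (x₀ := t) (bound := fun x => (1/δ) * (Real.exp (-x^2/2) / Real.sqrt (2*Real.pi)))
    (Metric.ball_mem_nhds t hδ)
    (Eventually.of_forall fun t' => (cont_integrand t').aestronglyMeasurable)
    (integrable_integrand (le_of_lt (by linarith : t.re < 0)))
    ((cont_integrand' t).aestronglyMeasurable)
    ?_ (gauss_div_integrable.const_mul _)
    (Eventually.of_forall fun x t' _ =>
      ((((hasDerivAt_id t').mul_const ((x:ℂ)^4)).div_const 24).cexp.const_mul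
        (Complex.exp (-(x:ℂ)^2/2))).div_const _)
  · exact key.2.differentiableAt
  · refine Eventually.of_forall fun x t' ht' => ?_
    have hu : (0:ℝ) ≤ x^4/24 := by positivity
    have htre : t'.re ≤ -δ := by
      have h1 : |(t' - t).re| ≤ ‖t' - t‖ := Complex.abs_re_le_norm _
      have h2 : ‖t' - t‖ < δ := by
        rw [← Complex.dist_eq]; exact Metric.mem_ball.mp ht'
      have h3 : (t' - t).re = t'.re - t.re := Complex.sub_re _ _
      have h4 : t.re = -(2*δ) := by rw [hδdef]; ring
      have := abs_le.mp (le_of_lt (lt_of_le_of_lt h1 h2))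
      linarith [this.2]
    have hnorm24 : ‖(1*(x:ℂ)^4/24 : ℂ)‖ = x^4/24 := by
      rw [one_mul, norm_div, norm_pow, Complex.norm_real]
      have h24 : ‖(24:ℂ)‖ = 24 := by
        rw [show (24:ℂ) = ((24:ℝ):ℂ) by norm_num, Complex.norm_real]
        rw [Real.norm_eq_abs]; norm_num
      rw [h24, Real.norm_eq_abs, ← abs_pow, abs_of_nonneg (by positivity : (0:ℝ) ≤ x^4)]
    rw [norm_div, norm_mul, norm_gauss_cexp, norm_mul, hnorm24, Complex.norm_real,
      Real.norm_eq_abs, abs_of_nonneg (Real.sqrt_nonneg _)]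
    have hexp : ‖Complex.exp (t'*(x:ℂ)^4/24)‖ = Real.exp (t'.re * (x^4/24)) := by
      rw [Complex.norm_exp, re_quartic]
    rw [hexp]
    have hb : Real.exp (t'.re * (x^4/24)) * (x^4/24) ≤ 1/δ := by
      have h5 : Real.exp (t'.re * (x^4/24)) ≤ Real.exp (-(δ * (x^4/24))) := by
        apply Real.exp_le_exp.mpr
        have := mul_le_mul_of_nonneg_right htre hu
        linarith
      calc Real.exp (t'.re * (x^4/24)) * (x^4/24)
          ≤ Real.exp (-(δ * (x^4/24))) * (x^4/24) :=
            mul_le_mul_of_nonneg_right h5 hu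
        _ = (x^4/24) * Real.exp (-(δ * (x^4/24))) := mul_comm _ _
        _ ≤ 1/δ := aux_mul_exp hδ hu
    have hS : (0:ℝ) < Real.sqrt (2*Real.pi) := Real.sqrt_pos.mpr (by positivity)
    calc Real.exp (-x^2/2) * (Real.exp (t'.re * (x^4/24)) * (x^4/24)) / Real.sqrt (2*Real.pi)
        ≤ Real.exp (-x^2/2) * (1/δ) / Real.sqrt (2*Real.pi) := by gcongr
      _ = (1/δ) * (Real.exp (-x^2/2) / Real.sqrt (2*Real.pi)) := by ring

lemma asym_part {ε : ℝ} (hε : 0 < ε) :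
    IsAsymptoticExpansionAt (Sector ε) Zfun
      (fun v => ((∫ x : ℝ, Real.exp (-x ^ 2 / 2) * x ^ (4 * v)
          / Real.sqrt (2 * Real.pi) : ℝ) : ℂ) / ((24 : ℂ) ^ v * (v ! : ℂ))) := by
  intro m
  set a : ℕ → ℂ := fun v => ((∫ x : ℝ, Real.exp (-x ^ 2 / 2) * x ^ (4 * v)
      / Real.sqrt (2 * Real.pi) : ℝ) : ℂ) / ((24 : ℂ) ^ v * (v ! : ℂ)) with ha
  set C : ℝ := (∫ x : ℝ, Real.exp (-x^2/2) * x^(4*(m+2)) / Real.sqrt (2*Real.pi))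
      / (24^(m+2) * (m+2)!) with hC
  rw [← tendsto_sub_nhds_zero_iff]
  apply squeeze_zero_norm' (a := fun z : ℂ => ‖z‖ * C)
  · filter_upwards [self_mem_nhdsWithin] with z hz
    obtain ⟨hre, hne⟩ := sector_facts hε hz
    have hz0 : 0 < ‖z‖ := norm_pos_iff.mpr hne
    have hzp : (z:ℂ)^(m+1) ≠ 0 := pow_ne_zero _ hne
    have heq : (Zfun z - ∑ v ∈ Finset.range (m+1), a v * z^v)/z^(m+1) - a (m+1)
        = (Zfun z - ∑ v ∈ Finset.range (m+2), a v * z^v)/z^(m+1) := by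
      conv_rhs => rw [Finset.sum_range_succ]
      field_simp
      ring
    rw [heq, norm_div, norm_pow]
    have key := remainder_bound hre (m+2)
    calc ‖Zfun z - ∑ v ∈ Finset.range (m+2), a v * z^v‖ / ‖z‖^(m+1)
        ≤ (‖z‖^(m+2) * C) / ‖z‖^(m+1) := by
          apply (div_le_div_iff_of_pos_right (pow_pos hz0 (m+1))).mpr
          exact key
      _ = ‖z‖ * C := by
          have hzn : ‖z‖^(m+1) ≠ 0 := ne_of_gt (pow_pos hz0 _)
          rw [div_eq_iff hzn, pow_succ]
          ring
  · have h := (continuous_norm.mul (continuous_const (y := C))).tendsto (0:ℂ)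
    simp only [Pi.mul_apply, norm_zero, zero_mul] at h
    exact h.mono_left nhdsWithin_le_nhds

/-- For `Re t < 0` the integral `Z(t)` converges and is holomorphic in `t`, and
on each sector `Ω_ε` its asymptotic expansion at `t = 0` is the series
`Σ_v t^v/((4!)^v v!) ∫ e^{-x²/2} x^{4v} dx/√(2π)`. -/
theorem Zfun_holomorphic_and_asymptotic :
    (∀ t : ℂ, t.re < 0 → Integrable (fun x : ℝ =>
      Complex.exp (-(x : ℂ) ^ 2 / 2) * Complex.exp (t * (x : ℂ) ^ 4 / 24)
        / (Real.sqrt (2 * Real.pi) : ℂ))) ∧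
    DifferentiableOn ℂ Zfun {t : ℂ | t.re < 0} ∧
    ∀ ε : ℝ, 0 < ε →
      IsAsymptoticExpansionAt (Sector ε) Zfun
        (fun v => ((∫ x : ℝ, Real.exp (-x ^ 2 / 2) * x ^ (4 * v)
            / Real.sqrt (2 * Real.pi) : ℝ) : ℂ) / ((24 : ℂ) ^ v * (v ! : ℂ))) :=
  ⟨fun _ ht => integrable_integrand ht.le, holo_part, fun _ hε => asym_part hε⟩
end

section
/- For any complex n×n matrices X = [x_{ij}] and any j > 0, applying the differential operator trace((∂/∂Y)^j) to exp(trace(Xᵗ Y)) and evaluating at Y = 0 yields trace(X^j), where ∂/∂Y = [∂/∂y_{ij}]. More generally, (trace((∂/∂Y)^j))^v applied to exp(trace(Xᵗ Y)) at Y = 0 equals (trace(X^j))^v. -/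
open Matrix

/-- The partial derivative `∂/∂y_{ab}` of a function of a complex `n×n` matrix,
as a directional derivative in the direction of the elementary matrix `E_{ab}`. -/
noncomputable def matrixPartialDeriv {n : ℕ} (a b : Fin n)
    (f : Matrix (Fin n) (Fin n) ℂ → ℂ) : Matrix (Fin n) (Fin n) ℂ → ℂ :=
  fun Y => deriv (fun s : ℂ => f (Y + s • Matrix.single a b 1)) 0

/-- The operator `trace((∂/∂Y)^j) = Σ_{i_1,…,i_j} ∂/∂y_{i_1 i_2} ⋯ ∂/∂y_{i_j i_1}`. -/
noncomputable def traceDerivPow (n j : ℕ)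
    (f : Matrix (Fin n) (Fin n) ℂ → ℂ) : Matrix (Fin n) (Fin n) ℂ → ℂ :=
  fun Y => ∑ i : Fin j → Fin n,
    ((List.finRange j).foldr
      (fun k g => matrixPartialDeriv (i k) (i ⟨(k.1 + 1) % j, Nat.mod_lt _ k.pos⟩) g)
      f) Y

lemma partial_exp {n : ℕ} (X : Matrix (Fin n) (Fin n) ℂ) (a b : Fin n) (c : ℂ) :
    matrixPartialDeriv a b (fun Y => c * Complex.exp (Matrix.trace (Xᵀ * Y)))
      = fun Y => (c * X a b) * Complex.exp (Matrix.trace (Xᵀ * Y)) := by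
  funext Y
  have ht : ∀ s : ℂ, Matrix.trace (Xᵀ * (Y + s • Matrix.single a b 1))
      = Matrix.trace (Xᵀ * Y) + s * X a b := by
    intro s
    rw [Matrix.mul_add, Matrix.trace_add, Matrix.mul_smul, Matrix.trace_smul, smul_eq_mul]
    congr 2
    simp only [Matrix.trace, Matrix.mul_apply, Matrix.single, Matrix.diag,
      Matrix.of_apply, Matrix.transpose_apply, mul_ite, mul_one, mul_zero, ite_and]
    rw [Finset.sum_comm]
    simp
  show deriv (fun s : ℂ => c * Complex.exp (Matrix.trace (Xᵀ * (Y + s • Matrix.single a b 1)))) 0 = _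
  simp only [ht]
  have h1 : HasDerivAt (fun s : ℂ => Matrix.trace (Xᵀ * Y) + s * X a b) (X a b) 0 := by
    simpa using ((hasDerivAt_id (0:ℂ)).mul_const (X a b)).const_add (Matrix.trace (Xᵀ * Y))
  have h2 := (h1.cexp).const_mul c
  rw [h2.deriv]
  ring_nf

lemma fold_exp {n : ℕ} (X : Matrix (Fin n) (Fin n) ℂ) {j : ℕ} (p q : Fin j → Fin n)
    (c : ℂ) (l : List (Fin j)) :
    l.foldr (fun k g => matrixPartialDeriv (p k) (q k) g)
        (fun Y => c * Complex.exp (Matrix.trace (Xᵀ * Y)))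
      = fun Y => ((l.map (fun k => X (p k) (q k))).prod * c)
          * Complex.exp (Matrix.trace (Xᵀ * Y)) := by
  induction l with
  | nil => simp
  | cons k t ih =>
    rw [List.foldr_cons, ih, partial_exp]
    funext Y
    simp only [List.map_cons, List.prod_cons]
    ring

lemma key_lemma {n : ℕ} (X : Matrix (Fin n) (Fin n) ℂ) :
    ∀ (m : ℕ) (B : Matrix (Fin n) (Fin n) ℂ),
    ∑ i : Fin (m+1) → Fin n,
        (∏ k : Fin m, X (i k.castSucc) (i k.succ)) * B (i (Fin.last m)) (i 0)
      = Matrix.trace (X ^ m * B) := by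
  intro m
  induction m with
  | zero =>
    intro B
    rw [pow_zero, Matrix.one_mul]
    rw [← (Equiv.funUnique (Fin 1) (Fin n)).symm.sum_comp]
    simp [Matrix.trace, Matrix.diag]
  | succ m ih =>
    intro B
    rw [← (Fin.consEquiv (fun _ : Fin (m+2) => Fin n)).sum_comp]
    rw [Fintype.sum_prod_type]
    have : ∀ (a : Fin n) (i' : Fin (m+1) → Fin n),
        (∏ k : Fin (m+1), X ((Fin.cons a i' : Fin (m+2) → Fin n) k.castSucc)
            ((Fin.cons a i' : Fin (m+2) → Fin n) k.succ))
          * B ((Fin.cons a i' : Fin (m+2) → Fin n) (Fin.last (m+1)))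
              ((Fin.cons a i' : Fin (m+2) → Fin n) 0)
        = X a (i' 0) * ((∏ k : Fin m, X (i' k.castSucc) (i' k.succ)) * (B (i' (Fin.last m)) a)) := by
      intro a i'
      rw [Fin.prod_univ_succ]
      have e1 : ((0 : Fin (m+1)).castSucc : Fin (m+2)) = 0 := rfl
      have e2 : ∀ k : Fin (m+1), (Fin.cons a i' : Fin (m+2) → Fin n) k.succ = i' k := by
        intro k; simp
      have e3 : ∀ k : Fin m, (k.succ.castSucc : Fin (m+2)) = (k.castSucc).succ := by
        intro k; ext; simp
      rw [e1, Fin.cons_zero, e2, ← Fin.succ_last]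
      rw [e2]
      have e4 : ∀ k : Fin m, (Fin.cons a i' : Fin (m+2) → Fin n) (k.succ.castSucc) = i' k.castSucc := by
        intro k; rw [e3, e2]
      simp only [e4, e2]
      ring
    simp only [Fin.consEquiv_apply, this]
    rw [Finset.sum_comm]
    have : ∀ i' : Fin (m+1) → Fin n,
        ∑ a : Fin n, X a (i' 0) * ((∏ k : Fin m, X (i' k.castSucc) (i' k.succ)) * (B (i' (Fin.last m)) a))
          = (∏ k : Fin m, X (i' k.castSucc) (i' k.succ)) * ((B * X) (i' (Fin.last m)) (i' 0)) := by
      intro i'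
      rw [Matrix.mul_apply, Finset.mul_sum]
      apply Finset.sum_congr rfl
      intro a _
      ring
    simp only [this]
    rw [ih (B * X), ← Matrix.mul_assoc, Matrix.trace_mul_comm, ← Matrix.mul_assoc, ← pow_succ']

lemma cyc {n j : ℕ} (hj : 0 < j) (X : Matrix (Fin n) (Fin n) ℂ) :
    ∑ i : Fin j → Fin n,
        ∏ k : Fin j, X (i k) (i ⟨(k.1 + 1) % j, Nat.mod_lt _ k.pos⟩)
      = Matrix.trace (X ^ j) := by
  haveI : NeZero j := ⟨hj.ne'⟩
  have hidx : ∀ k : Fin j, (⟨(k.1 + 1) % j, Nat.mod_lt _ k.pos⟩ : Fin j) = k + 1 := by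
    intro k
    apply Fin.ext
    show (k.1 + 1) % j = ((k + 1 : Fin j)).val
    rw [Fin.add_def, Fin.val_one']
    conv_lhs => rw [Nat.add_mod, Nat.mod_eq_of_lt k.2]
  simp only [hidx]
  obtain ⟨m, rfl⟩ : ∃ m, j = m + 1 := ⟨j - 1, by omega⟩
  have hc : ∀ (i : Fin (m+1) → Fin n),
      ∏ k : Fin (m+1), X (i k) (i (k + 1))
        = (∏ k : Fin m, X (i k.castSucc) (i k.succ)) * X (i (Fin.last m)) (i 0) := by
    intro i
    rw [Fin.prod_univ_castSucc]
    congr 1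
    · apply Finset.prod_congr rfl
      intro k _
      congr 2
      ext
      rw [Fin.add_def, Fin.val_one']
      have hm : 0 < m := k.pos
      have : 1 % (m + 1) = 1 := Nat.mod_eq_of_lt (by omega)
      rw [this, Fin.coe_castSucc]
      exact Nat.mod_eq_of_lt (by have := k.2; omega)
    · congr 1
      rw [Fin.last_add_one]
  simp only [hc]
  rw [key_lemma X m X, ← pow_succ]

lemma step_lemma {n j : ℕ} (hj : 0 < j) (X : Matrix (Fin n) (Fin n) ℂ) (c : ℂ) :
    traceDerivPow n j (fun Y => c * Complex.exp (Matrix.trace (Xᵀ * Y)))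
      = fun Y => (Matrix.trace (X ^ j) * c) * Complex.exp (Matrix.trace (Xᵀ * Y)) := by
  funext Y
  show (∑ i : Fin j → Fin n,
      ((List.finRange j).foldr
        (fun k g => matrixPartialDeriv (i k) (i ⟨(k.1 + 1) % j, Nat.mod_lt _ k.pos⟩) g)
        (fun Y => c * Complex.exp (Matrix.trace (Xᵀ * Y)))) Y) = _
  have h := fun (i : Fin j → Fin n) =>
    congrFun (fold_exp X i (fun k => i ⟨(k.1 + 1) % j, Nat.mod_lt _ k.pos⟩) c
      (List.finRange j)) Y
  simp only [h]
  have hp : ∀ i : Fin j → Fin n,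
      ((List.finRange j).map (fun k => X (i k) (i ⟨(k.1 + 1) % j, Nat.mod_lt _ k.pos⟩))).prod
        = ∏ k : Fin j, X (i k) (i ⟨(k.1 + 1) % j, Nat.mod_lt _ k.pos⟩) :=
    fun i => (Fin.prod_univ_def _).symm
  simp only [hp]
  rw [← Finset.sum_mul, ← Finset.sum_mul, cyc hj X]

/-- Applying `(trace((∂/∂Y)^j))^v` to `exp(trace(Xᵗ Y))` and evaluating at
`Y = 0` yields `(trace(X^j))^v`. -/
theorem traceDerivPow_exp_trace (n j v : ℕ) (hj : 0 < j)
    (X : Matrix (Fin n) (Fin n) ℂ) :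
    (traceDerivPow n j)^[v]
        (fun Y : Matrix (Fin n) (Fin n) ℂ => Complex.exp (Matrix.trace (Xᵀ * Y))) 0
      = Matrix.trace (X ^ j) ^ v := by
  have H : ∀ w : ℕ, (traceDerivPow n j)^[w]
      (fun Y : Matrix (Fin n) (Fin n) ℂ => Complex.exp (Matrix.trace (Xᵀ * Y)))
      = fun Y => Matrix.trace (X ^ j) ^ w * Complex.exp (Matrix.trace (Xᵀ * Y)) := by
    intro w
    induction w with
    | zero => funext Y; simp
    | succ w ih =>
      rw [Function.iterate_succ_apply', ih, step_lemma hj X]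
      funext Y
      ring
  rw [H v]
  simp
end

section
/- For any 2n functions φ_0,…,φ_{n-1}, ψ_0,…,ψ_{n-1} of one variable and points k_0,…,k_{n-1}, one has det[φ_i(k_ℓ)] · det[ψ_j(k_ℓ)] = Σ_{σ∈S_n} det[φ_i(k_{σ(j)})·ψ_j(k_{σ(j)})], where the sum runs over all permutations σ of {0,…,n−1}. -/
namespace Matrix

variable {ι R : Type*} [Fintype ι] [DecidableEq ι] [CommRing R]

theorem det_permute_cols_mul_cols (A : Matrix ι ι R) (σ : Equiv.Perm ι) (c : ι → R) :
    det (of fun i j => A i (σ j) * c j) = (∏ j, c j) * Equiv.Perm.sign σ * det A := by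
  have hcols : (of fun i j => A i (σ j) * c j) = of fun i j => c j * A.submatrix id σ i j := by
    ext i j
    exact mul_comm _ _
  rw [hcols, det_mul_row, det_permute', mul_assoc]

theorem det_eq_sum_perm_prod (B : Matrix ι ι R) :
    det B = ∑ σ : Equiv.Perm ι, (Equiv.Perm.sign σ : R) * ∏ j, B j (σ j) := by
  rw [← det_transpose, det_apply']
  rfl

/-- Expanding `det B` by Leibniz, the term of `σ` is absorbed into `det A` by scaling the
columns of `A` permuted by `σ`. -/
theorem det_mul_det_eq_sum_perm_det (A B : Matrix ι ι R) :
    det A * det B = ∑ σ : Equiv.Perm ι, det (of fun i j => A i (σ j) * B j (σ j)) := by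
  rw [det_eq_sum_perm_prod B, Finset.mul_sum]
  refine Finset.sum_congr rfl fun σ _ => ?_
  rw [det_permute_cols_mul_cols A σ fun j => B j (σ j)]
  ring

end Matrix

/-- For any `2n` functions `φ_0,…,φ_{n-1}, ψ_0,…,ψ_{n-1}` and points
`k_0,…,k_{n-1}`:
`det[φ_i(k_ℓ)] · det[ψ_j(k_ℓ)] = Σ_{σ∈S_n} det[φ_i(k_{σ(j)})·ψ_j(k_{σ(j)})]`. -/
theorem det_mul_det_eq_sum_perm {R K : Type*} [CommRing R] (n : ℕ)
    (φ ψ : Fin n → K → R) (k : Fin n → K) :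
    Matrix.det (Matrix.of fun i l => φ i (k l))
        * Matrix.det (Matrix.of fun j l => ψ j (k l))
      = ∑ σ : Equiv.Perm (Fin n),
          Matrix.det (Matrix.of fun i j => φ i (k (σ j)) * ψ j (k (σ j))) :=
  Matrix.det_mul_det_eq_sum_perm_det _ _
end
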